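/- arXiv:1701.05954 — 2 statements merged into one kernel-verified Lean document; each statement's English description precedes it below -/
import Mathlib

section
/- For a matrix B with equal row sums, τ(B) := sup{ ‖v'B‖₁ : v'e = 0, ‖v‖₁ = 1 } equals (1/2) max_{i,j} Σ_s |B_{is} − B_{js}|. -/
/-! Write `v = v⁺ - v⁻`. When `∑ v = 0` both parts have mass `‖v‖₁ / 2`, and multiplying `v'B` by
that mass turns it into `∑_{i,k} v⁺ᵢ v⁻ₖ (Bᵢ - Bₖ)`, a nonnegative combination of row differences
of total weight `(‖v‖₁ / 2)²`. Hence `‖v'B‖₁ ≤ ‖v‖₁ / 2 · maxᵢₖ ‖Bᵢ - Bₖ‖₁`, while for `i ≠ k`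
the vector `v = (eᵢ - eₖ) / 2` has `‖v'B‖₁ = ‖Bᵢ - Bₖ‖₁ / 2`. -/

open Finset

section

variable {ι κ : Type*} [Fintype ι] [Fintype κ]

theorem sum_posPart_eq_sum_negPart {v : ι → ℝ} (hv : ∑ i, v i = 0) :
    ∑ i, (v i)⁺ = ∑ i, (v i)⁻ := by
  rw [← sub_eq_zero, ← sum_sub_distrib]
  simpa only [posPart_sub_negPart] using hv

theorem sum_negPart_eq_half_sum_abs {v : ι → ℝ} (hv : ∑ i, v i = 0) :
    ∑ i, (v i)⁻ = (∑ i, |v i|) / 2 := by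
  have := sum_posPart_eq_sum_negPart hv
  simp only [← posPart_add_negPart, sum_add_distrib]
  linarith

theorem sum_negPart_mul_sum_mul_eq {v : ι → ℝ} (hv : ∑ i, v i = 0) (y : ι → ℝ) :
    (∑ k, (v k)⁻) * ∑ i, v i * y i = ∑ i, ∑ k, (v i)⁺ * (v k)⁻ * (y i - y k) := by
  calc (∑ k, (v k)⁻) * ∑ i, v i * y i
      = (∑ i, (v i)⁺ * y i) * ∑ k, (v k)⁻ - (∑ i, (v i)⁺) * ∑ k, (v k)⁻ * y k := by
        rw [sum_posPart_eq_sum_negPart hv, mul_comm _ (∑ k, (v k)⁻), ← mul_sub, ← sum_sub_distrib]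
        simp only [← sub_mul, posPart_sub_negPart]
    _ = ∑ i, ∑ k, (v i)⁺ * (v k)⁻ * (y i - y k) := by
        simp only [sum_mul_sum, ← sum_sub_distrib]
        refine sum_congr rfl fun i _ => sum_congr rfl fun k _ => ?_
        ring

theorem sum_abs_sum_mul_le (B : Matrix ι κ ℝ) {M : ℝ}
    (hM : ∀ i k, ∑ j, |B i j - B k j| ≤ M) {v : ι → ℝ} (hv : ∑ i, v i = 0) :
    ∑ j, |∑ i, v i * B i j| ≤ (∑ i, |v i|) / 2 * M := by
  have hs := sum_negPart_eq_half_sum_abs hv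
  rcases (sum_nonneg fun k _ => negPart_nonneg (v k)).eq_or_lt with hzero | hpos
  · have hv0 : ∀ i, v i = 0 := fun i => abs_eq_zero.mp <|
      (sum_eq_zero_iff_of_nonneg fun i _ => abs_nonneg (v i)).mp (by linarith) i (mem_univ i)
    simp [hv0]
  refine le_of_mul_le_mul_left ?_ hpos
  calc (∑ k, (v k)⁻) * ∑ j, |∑ i, v i * B i j|
      = ∑ j, |∑ i, ∑ k, (v i)⁺ * (v k)⁻ * (B i j - B k j)| := by
        rw [mul_sum]
        refine sum_congr rfl fun j _ => ?_
        rw [← sum_negPart_mul_sum_mul_eq hv, abs_mul, abs_of_pos hpos]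
    _ ≤ ∑ j, ∑ i, ∑ k, (v i)⁺ * (v k)⁻ * |B i j - B k j| := by
        gcongr with j _ i
        refine (abs_sum_le_sum_abs _ _).trans ?_
        gcongr
        refine (abs_sum_le_sum_abs _ _).trans_eq (sum_congr rfl fun k _ => ?_)
        rw [abs_mul, abs_of_nonneg (mul_nonneg (posPart_nonneg (v i)) (negPart_nonneg (v k)))]
    _ = ∑ i, ∑ k, (v i)⁺ * (v k)⁻ * ∑ j, |B i j - B k j| := by
        simp only [mul_sum]
        rw [sum_comm]
        exact sum_congr rfl fun i _ => sum_comm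
    _ ≤ ∑ i, ∑ k, (v i)⁺ * (v k)⁻ * M := by
        gcongr with i _ k _
        exact hM i k
    _ = (∑ k, (v k)⁻) * ((∑ i, |v i|) / 2 * M) := by
        simp only [← sum_mul]
        rw [← sum_mul_sum, sum_posPart_eq_sum_negPart hv, hs]
        ring

theorem exists_sum_abs_sum_mul_eq_half (B : Matrix ι κ ℝ) {i₀ i₁ : ι} (h : i₀ ≠ i₁) :
    ∃ v : ι → ℝ, ∑ i, v i = 0 ∧ ∑ i, |v i| = 1 ∧
      ∑ j, |∑ i, v i * B i j| = (∑ j, |B i₀ j - B i₁ j|) / 2 := by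
  classical
  set v : ι → ℝ := fun i => if i = i₀ then 1 / 2 else if i = i₁ then -(1 / 2) else 0
  have hcol (j : κ) : ∑ i, v i * B i j = (B i₀ j - B i₁ j) / 2 := by
    rw [Fintype.sum_eq_add i₀ i₁ h fun i hi => by simp [v, hi.1, hi.2]]
    simp only [one_div, ↓reduceIte, h.symm, neg_mul, v]
    ring
  refine ⟨v, ?_, ?_, ?_⟩
  · rw [Fintype.sum_eq_add i₀ i₁ h fun i hi => by simp [v, hi.1, hi.2]]
    simp [v, h.symm]
  · rw [Fintype.sum_eq_add i₀ i₁ h fun i hi => by simp [v, hi.1, hi.2]]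
    simp only [one_div, ↓reduceIte, abs_inv, Nat.abs_ofNat, h.symm, abs_neg, v]
    norm_num
  · simp_rw [hcol, abs_div, abs_two, sum_div]

end

theorem ergodic_coefficient_eq_general
    {n : Type*} [Fintype n]
    (B : Matrix n n ℝ) :
    sSup {r : ℝ | ∃ v : n → ℝ, (∑ i, v i = 0) ∧ (∑ i, |v i| = 1) ∧
        r = ∑ j, |∑ i, v i * B i j|}
      = (1 / 2 : ℝ) * (⨆ p : n × n, ∑ s, |B p.1 s - B p.2 s|) := by
  set S := {r : ℝ | ∃ v : n → ℝ, (∑ i, v i = 0) ∧ (∑ i, |v i| = 1) ∧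
    r = ∑ j, |∑ i, v i * B i j|}
  set M := ⨆ p : n × n, ∑ s, |B p.1 s - B p.2 s|
  have hM (i k : n) : ∑ s, |B i s - B k s| ≤ M :=
    le_ciSup (f := fun p : n × n => ∑ s, |B p.1 s - B p.2 s|)
      (Set.finite_range _).bddAbove (i, k)
  have hS_le : ∀ r ∈ S, r ≤ 1 / 2 * M := by
    rintro r ⟨v, hv, hv_abs, rfl⟩
    simpa only [hv_abs, one_div] using sum_abs_sum_mul_le B hM hv
  have hS_nonneg : ∀ r ∈ S, 0 ≤ r := by
    rintro r ⟨v, -, -, rfl⟩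
    positivity
  have hM_le : M ≤ 2 * sSup S := by
    refine Real.iSup_le (fun ⟨i, k⟩ => ?_) (by linarith [Real.sSup_nonneg hS_nonneg])
    rcases eq_or_ne i k with rfl | hik
    · simpa using Real.sSup_nonneg hS_nonneg
    · obtain ⟨v, hv, hv_abs, hv_eq⟩ := exists_sum_abs_sum_mul_eq_half B hik
      have := le_csSup ⟨_, hS_le⟩ ⟨v, hv, hv_abs, hv_eq.symm⟩
      linarith
  have hM_nonneg : 0 ≤ M := Real.iSup_nonneg fun _ => by positivity
  exact le_antisymm (Real.sSup_le hS_le (by positivity)) (by linarith)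

/-- Variational characterization of the ergodic coefficient: for a matrix `B`
with equal row sums, `sup{‖v'B‖₁ : v'e = 0, ‖v‖₁ = 1}` equals
`(1/2) max_{i,j} Σ_s |B_{is} − B_{js}|`. -/
theorem ergodic_coefficient_eq
    {n : Type*} [Fintype n] [Nonempty n]
    (B : Matrix n n ℝ)
    (hrows : ∃ c : ℝ, ∀ i, ∑ j, B i j = c) :
    sSup {r : ℝ | ∃ v : n → ℝ, (∑ i, v i = 0) ∧ (∑ i, |v i| = 1) ∧
        r = ∑ j, |∑ i, v i * B i j|}
      = (1 / 2 : ℝ) * (⨆ p : n × n, ∑ s, |B p.1 s - B p.2 s|) :=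
  ergodic_coefficient_eq_general B
end

section
/- Let π₁, π₂ be the unique stationary distributions of stochastic matrices P₁, P₂ on a finite state space, E = P₁ − P₂, and Z₂ = (I − P₂ + e·π₂')⁻¹ the fundamental matrix of P₂. Then ‖π₁ − π₂‖₁ ≤ ‖π₁'E‖₁ · ‖Z₂‖₁, where ‖Z₂‖₁ denotes the matrix norm induced by the ℓ₁ vector norm (acting on the left as row vectors). -/
/-!
Since `π₁ P₁ = π₁`, `π₂ P₂ = π₂` and `(π₁ − π₂) e = 0`, multiplying `π₁ − π₂` by
`A = I − P₂ + e π₂'` gives `π₁ − π₁ P₂ = π₁ (P₁ − P₂)`. Hence `π₁ − π₂ = π₁ E Z₂`, and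
the bound is the submultiplicativity of the ℓ₁ norm of row vectors against the maximum
row sum norm of `Z₂`.
-/

open Finset Matrix

theorem sum_abs_vecMul_le {m k : Type*} [Fintype m] [Fintype k] (v : m → ℝ) (M : Matrix m k ℝ) :
    ∑ j, |(v ᵥ* M) j| ≤ (∑ i, |v i|) * ⨆ i, ∑ j, |M i j| := by
  have hrow : ∀ i, ∑ j, |M i j| ≤ ⨆ i, ∑ j, |M i j| :=
    le_ciSup (Set.finite_range _).bddAbove
  calc ∑ j, |(v ᵥ* M) j| ≤ ∑ j, ∑ i, |v i| * |M i j| := by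
        gcongr with j
        simpa only [vecMul, dotProduct, abs_mul] using abs_sum_le_sum_abs (fun i => v i * M i j) univ
    _ = ∑ i, |v i| * ∑ j, |M i j| := by
        rw [sum_comm]; simp only [mul_sum]
    _ ≤ ∑ i, |v i| * ⨆ i, ∑ j, |M i j| := by
        gcongr with i; exact hrow i
    _ = (∑ i, |v i|) * ⨆ i, ∑ j, |M i j| := (sum_mul ..).symm

theorem sub_vecMul_fundamental {n R : Type*} [Fintype n] [DecidableEq n] [CommRing R]
    {P₁ P₂ : Matrix n n R} {π₁ π₂ : n → R} (hstat₁ : π₁ ᵥ* P₁ = π₁) (hstat₂ : π₂ ᵥ* P₂ = π₂)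
    (hsum : ∑ i, π₁ i = ∑ i, π₂ i) :
    (π₁ - π₂) ᵥ* (1 - P₂ + vecMulVec (fun _ => 1) π₂) = π₁ ᵥ* (P₁ - P₂) := by
  have hmass : (π₁ - π₂) ⬝ᵥ (fun _ => 1) = 0 := by
    rw [sub_dotProduct, ← Pi.one_def, dotProduct_one, dotProduct_one, hsum, sub_self]
  rw [vecMul_add, vecMul_sub, vecMul_one, vecMul_vecMulVec, hmass, zero_smul, sub_vecMul,
    vecMul_sub, hstat₁, hstat₂]
  abel

theorem sub_eq_vecMul_fundamental_inv {n R : Type*} [Fintype n] [DecidableEq n] [CommRing R]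
    {P₁ P₂ : Matrix n n R} {π₁ π₂ : n → R} (hstat₁ : π₁ ᵥ* P₁ = π₁) (hstat₂ : π₂ ᵥ* P₂ = π₂)
    (hsum : ∑ i, π₁ i = ∑ i, π₂ i) (hinv : IsUnit (1 - P₂ + vecMulVec (fun _ => 1) π₂).det) :
    π₁ - π₂ = (π₁ ᵥ* (P₁ - P₂)) ᵥ* (1 - P₂ + vecMulVec (fun _ => 1) π₂)⁻¹ := by
  rw [← sub_vecMul_fundamental hstat₁ hstat₂ hsum, vecMul_vecMul, mul_nonsing_inv _ hinv,
    vecMul_one]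

theorem stationary_perturbation_bound_general
    {n : Type*} [Fintype n] [DecidableEq n]
    (P₁ P₂ : Matrix n n ℝ)
    (π₁ π₂ : n → ℝ)
    (hπ₁1 : ∑ i, π₁ i = 1)
    (hπ₂1 : ∑ i, π₂ i = 1)
    (hstat₁ : Matrix.vecMul π₁ P₁ = π₁)
    (hstat₂ : Matrix.vecMul π₂ P₂ = π₂)
    (hinv : IsUnit (1 - P₂ + Matrix.vecMulVec (fun _ => (1 : ℝ)) π₂).det) :
    (∑ i, |π₁ i - π₂ i|) ≤
      (∑ j, |∑ i, π₁ i * (P₁ - P₂) i j|) *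
        (⨆ i, ∑ j, |((1 - P₂ + Matrix.vecMulVec (fun _ => (1 : ℝ)) π₂)⁻¹ : Matrix n n ℝ) i j|) := by
  have hdiff := sub_eq_vecMul_fundamental_inv hstat₁ hstat₂ (hπ₁1.trans hπ₂1.symm) hinv
  calc ∑ i, |π₁ i - π₂ i| = ∑ i, |(π₁ - π₂) i| := rfl
    _ ≤ _ := hdiff ▸ sum_abs_vecMul_le _ _

/-- Perturbation bound for stationary distributions:
`‖π₁ − π₂‖₁ ≤ ‖π₁'E‖₁ · ‖Z₂‖₁` with `E = P₁ − P₂` and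
`Z₂ = (I − P₂ + e π₂')⁻¹`, where `‖Z₂‖₁` is the norm induced by the ℓ₁ vector
norm acting on the left by row vectors (the maximum row ℓ₁ sum). -/
theorem stationary_perturbation_bound
    {n : Type*} [Fintype n] [DecidableEq n] [Nonempty n]
    (P₁ P₂ : Matrix n n ℝ)
    (hP₁0 : ∀ i j, 0 ≤ P₁ i j) (hP₁1 : ∀ i, ∑ j, P₁ i j = 1)
    (hP₂0 : ∀ i j, 0 ≤ P₂ i j) (hP₂1 : ∀ i, ∑ j, P₂ i j = 1)
    (π₁ π₂ : n → ℝ)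
    (hπ₁0 : ∀ i, 0 ≤ π₁ i) (hπ₁1 : ∑ i, π₁ i = 1)
    (hπ₂0 : ∀ i, 0 ≤ π₂ i) (hπ₂1 : ∑ i, π₂ i = 1)
    (hstat₁ : Matrix.vecMul π₁ P₁ = π₁)
    (hstat₂ : Matrix.vecMul π₂ P₂ = π₂)
    (huniq₁ : ∀ μ : n → ℝ, (∀ i, 0 ≤ μ i) → (∑ i, μ i = 1) →
      Matrix.vecMul μ P₁ = μ → μ = π₁)
    (huniq₂ : ∀ μ : n → ℝ, (∀ i, 0 ≤ μ i) → (∑ i, μ i = 1) →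
      Matrix.vecMul μ P₂ = μ → μ = π₂)
    (hinv : IsUnit (1 - P₂ + Matrix.vecMulVec (fun _ => (1 : ℝ)) π₂).det) :
    (∑ i, |π₁ i - π₂ i|) ≤
      (∑ j, |∑ i, π₁ i * (P₁ - P₂) i j|) *
        (⨆ i, ∑ j, |((1 - P₂ + Matrix.vecMulVec (fun _ => (1 : ℝ)) π₂)⁻¹ : Matrix n n ℝ) i j|) :=
  stationary_perturbation_bound_general P₁ P₂ π₁ π₂ hπ₁1 hπ₂1 hstat₁ hstat₂ hinv
end
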